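/- arXiv:1210.6134 — 3 statements merged into one kernel-verified Lean document; each statement's English description precedes it below -/
import Mathlib

section
/- Let φ(1), …, φ(M) be independent random variables, each uniformly distributed on {−1, +1}, and let s := Σ_{m=1}^M N_m·φ(m). Then Var(s²) ≤ 2·F₂², where F₂ = Σ_{m=1}^M N_m². -/
/-!
Write `s = ∑ m, Y m` with `Y m = N m * φ m`. The `Y m` are independent, their odd moments vanish,
`E[Y m ^ 2] = N m ^ 2` and `E[Y m ^ 4] = N m ^ 4`. Adding one independent summand at a time and
expanding `(S + Y) ^ n` binomially, only the even moments of `Y` survive; this gives `E[s ^ 2] = F₂`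
and `E[s ^ 4] ≤ 3 F₂ ^ 2` by induction on the index set. Hence
`Var(s ^ 2) = E[s ^ 4] - E[s ^ 2] ^ 2 ≤ 2 F₂ ^ 2`.
-/

open MeasureTheory ProbabilityTheory Finset

section

variable {Ω : Type*} [MeasurableSpace Ω] {μ : Measure Ω}

lemma MeasureTheory.MemLp.integrable_pow_of_le [IsFiniteMeasure μ] {X : Ω → ℝ} {n k : ℕ}
    (hX : MemLp X n μ) (hk : k ≤ n) : Integrable (fun ω => X ω ^ k) μ := by
  have hXk : MemLp X k μ := hX.mono_exponent (by exact_mod_cast hk)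
  refine hXk.integrable_norm_pow'.mono' (hX.1.pow k) (.of_forall fun ω => ?_)
  simp [norm_pow]

lemma ProbabilityTheory.IndepFun.integral_add_pow [IsFiniteMeasure μ] {X Y : Ω → ℝ} {n : ℕ}
    (hXY : IndepFun X Y μ) (hX : MemLp X n μ) (hY : MemLp Y n μ) :
    ∫ ω, (X ω + Y ω) ^ n ∂μ =
      ∑ k ∈ range (n + 1), (∫ ω, X ω ^ k ∂μ) * (∫ ω, Y ω ^ (n - k) ∂μ) * n.choose k := by
  have hindep (k j : ℕ) : IndepFun (fun ω => X ω ^ k) (fun ω => Y ω ^ j) μ :=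
    hXY.comp (measurable_id.pow_const k) (measurable_id.pow_const j)
  have hterm (k : ℕ) (hk : k ∈ range (n + 1)) :
      Integrable (fun ω => X ω ^ k * Y ω ^ (n - k) * n.choose k) μ :=
    ((hindep k (n - k)).integrable_mul
      (hX.integrable_pow_of_le (Nat.lt_succ_iff.1 (mem_range.1 hk)))
      (hY.integrable_pow_of_le (Nat.sub_le n k))).mul_const _
  simp_rw [add_pow]
  rw [integral_finsetSum _ hterm]
  refine sum_congr rfl fun k _ => ?_
  rw [integral_mul_const, (hindep k (n - k)).integral_fun_mul_eq_mul_integral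
    (hX.1.pow k) (hY.1.pow (n - k))]

lemma ProbabilityTheory.iIndepFun.indepFun_fun_finsetSum_of_notMem {ι : Type*}
    {Y : ι → Ω → ℝ} (hY : iIndepFun Y μ) (hmeas : ∀ i, AEMeasurable (Y i) μ)
    {s : Finset ι} {i : ι} (hi : i ∉ s) :
    IndepFun (Y i) (fun ω => ∑ j ∈ s, Y j ω) μ := by
  simpa only [Finset.sum_fn] using (hY.indepFun_finsetSum_of_notMem₀ hmeas hi).symm

section IndependentSum

variable [IsProbabilityMeasure μ] {ι : Type*} {Y : ι → Ω → ℝ}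

lemma integral_finsetSum_sq_of_iIndepFun (hY : iIndepFun Y μ) (hL2 : ∀ i, MemLp (Y i) 2 μ)
    (hmean : ∀ i, ∫ ω, Y i ω ∂μ = 0) (s : Finset ι) :
    ∫ ω, (∑ i ∈ s, Y i ω) ^ 2 ∂μ = ∑ i ∈ s, ∫ ω, Y i ω ^ 2 ∂μ := by
  classical
  induction s using Finset.induction_on with
  | empty => simp
  | insert i s hi ih =>
    have hindep := hY.indepFun_fun_finsetSum_of_notMem (fun j => (hL2 j).aemeasurable) hi
    simp_rw [sum_insert hi]
    rw [hindep.integral_add_pow (hL2 i) (memLp_finsetSum s fun j _ => hL2 j), ← ih]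
    simp [sum_range_succ, hmean]
    ring

lemma integral_finsetSum_pow_four_le_of_iIndepFun (hY : iIndepFun Y μ)
    (hL4 : ∀ i, MemLp (Y i) 4 μ) (hmean : ∀ i, ∫ ω, Y i ω ∂μ = 0)
    (hthird : ∀ i, ∫ ω, Y i ω ^ 3 ∂μ = 0)
    (hfourth : ∀ i, ∫ ω, Y i ω ^ 4 ∂μ ≤ 3 * (∫ ω, Y i ω ^ 2 ∂μ) ^ 2) (s : Finset ι) :
    ∫ ω, (∑ i ∈ s, Y i ω) ^ 4 ∂μ ≤ 3 * (∑ i ∈ s, ∫ ω, Y i ω ^ 2 ∂μ) ^ 2 := by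
  classical
  have hL2 (i : ι) : MemLp (Y i) 2 μ := (hL4 i).mono_exponent (by norm_num)
  induction s using Finset.induction_on with
  | empty => simp
  | insert i s hi ih =>
    have hindep := hY.indepFun_fun_finsetSum_of_notMem (fun j => (hL4 j).aemeasurable) hi
    have hsq := integral_finsetSum_sq_of_iIndepFun hY hL2 hmean s
    simp_rw [sum_insert hi]
    rw [hindep.integral_add_pow (hL4 i) (memLp_finsetSum s fun j _ => hL4 j)]
    simp [sum_range_succ, hmean, hthird, hsq, Nat.choose_two_right]
    linarith [hfourth i]

end IndependentSum

structure IsRademacher (X : Ω → ℝ) (μ : Measure Ω) : Prop where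
  measurable : Measurable X
  measure_eq_one : μ {ω | X ω = 1} = 1 / 2
  measure_eq_neg_one : μ {ω | X ω = -1} = 1 / 2

namespace IsRademacher

variable [IsProbabilityMeasure μ] {X : Ω → ℝ}

lemma ae_eq_one_or_eq_neg_one (hX : IsRademacher X μ) : ∀ᵐ ω ∂μ, X ω = 1 ∨ X ω = -1 := by
  have hpos : MeasurableSet {ω | X ω = 1} := hX.measurable (measurableSet_singleton 1)
  have hneg : MeasurableSet {ω | X ω = -1} := hX.measurable (measurableSet_singleton (-1))
  have hdisj : Disjoint {ω | X ω = 1} {ω | X ω = -1} :=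
    Set.disjoint_left.2 fun ω (h1 : X ω = 1) (h2 : X ω = -1) => by norm_num [h1] at h2
  have hunion : MeasurableSet {ω | X ω = 1 ∨ X ω = -1} := hpos.union hneg
  rw [ae_iff_measure_eq hunion.nullMeasurableSet, Set.ofPred_or,
    measure_union hdisj hneg, hX.measure_eq_one, hX.measure_eq_neg_one, measure_univ,
    ENNReal.add_halves]

lemma memLp_top (hX : IsRademacher X μ) : MemLp X ⊤ μ :=
  memLp_top_of_bound hX.measurable.aestronglyMeasurable 1 <| by
    filter_upwards [hX.ae_eq_one_or_eq_neg_one] with ω h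
    rcases h with h | h <;> simp [h]

lemma integral_eq_zero (hX : IsRademacher X μ) : ∫ ω, X ω ∂μ = 0 := by
  have hpos : MeasurableSet {ω | X ω = 1} := hX.measurable (measurableSet_singleton 1)
  have hneg : MeasurableSet {ω | X ω = -1} := hX.measurable (measurableSet_singleton (-1))
  have hX_eq : X =ᵐ[μ] fun ω => {ω | X ω = 1}.indicator 1 ω - {ω | X ω = -1}.indicator 1 ω := by
    filter_upwards [hX.ae_eq_one_or_eq_neg_one] with ω h
    rcases h with h | h <;> norm_num [Set.indicator_apply, h]
  rw [integral_congr_ae hX_eq, integral_sub ((integrable_const 1).indicator hpos)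
    ((integrable_const 1).indicator hneg), integral_indicator_one hpos,
    integral_indicator_one hneg, measureReal_def, measureReal_def, hX.measure_eq_one,
    hX.measure_eq_neg_one, sub_self]

lemma integral_const_mul_pow (hX : IsRademacher X μ) (c : ℝ) (k : ℕ) :
    ∫ ω, (c * X ω) ^ k ∂μ = if Even k then c ^ k else 0 := by
  have hpow : (fun ω => (c * X ω) ^ k) =ᵐ[μ] fun ω => c ^ k * if Even k then 1 else X ω := by
    filter_upwards [hX.ae_eq_one_or_eq_neg_one] with ω h
    rcases h with h | h
    · simp [h]
    · rcases Nat.even_or_odd k with hk | hk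
      · simp [h, hk, hk.neg_pow]
      · simp [h, Nat.not_even_iff_odd.2 hk, hk.neg_pow]
  rw [integral_congr_ae hpow, integral_const_mul]
  split_ifs <;> simp [hX.integral_eq_zero]

end IsRademacher

end

/-- **AMS sketch, variance bound.**
If `φ 1, …, φ M` are independent random signs, each uniform on `{-1, +1}`, and
`s ω = ∑ m, Nm m * φ m ω`, then `Var(s²) ≤ 2·F₂²` where `F₂ = ∑ m, (Nm m)²`. -/
theorem variance_sq_sign_sketch
    {Ω : Type*} [MeasurableSpace Ω] (μ : Measure Ω) [IsProbabilityMeasure μ]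
    (M : ℕ) (Nm : Fin M → ℝ) (φ : Fin M → Ω → ℝ)
    (hmeas : ∀ m, Measurable (φ m))
    (hindep : iIndepFun φ μ)
    (hpos : ∀ m, μ {ω | φ m ω = 1} = 1 / 2)
    (hneg : ∀ m, μ {ω | φ m ω = -1} = 1 / 2) :
    variance (fun ω => (∑ m, Nm m * φ m ω) ^ 2) μ ≤ 2 * (∑ m, Nm m ^ 2) ^ 2 := by
  have hφ (m : Fin M) : IsRademacher (φ m) μ := ⟨hmeas m, hpos m, hneg m⟩
  have hY : iIndepFun (fun m ω => Nm m * φ m ω) μ :=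
    hindep.comp (fun m x => Nm m * x) fun m => measurable_const_mul (Nm m)
  have hYLp (m : Fin M) (p : ENNReal) : MemLp (fun ω => Nm m * φ m ω) p μ :=
    ((hφ m).memLp_top.const_mul (Nm m)).mono_exponent le_top
  have hmoment (m : Fin M) := (hφ m).integral_const_mul_pow (Nm m)
  have hmean (m : Fin M) : ∫ ω, Nm m * φ m ω ∂μ = 0 := by simpa using hmoment m 1
  have hsecond : ∫ ω, (∑ m, Nm m * φ m ω) ^ 2 ∂μ = ∑ m, Nm m ^ 2 := by
    simpa [hmoment] using integral_finsetSum_sq_of_iIndepFun hY (hYLp · 2) hmean univ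
  have hfourth : ∫ ω, (∑ m, Nm m * φ m ω) ^ 4 ∂μ ≤ 3 * (∑ m, Nm m ^ 2) ^ 2 := by
    refine (integral_finsetSum_pow_four_le_of_iIndepFun hY (hYLp · 4) hmean
      (fun m => by simp [hmoment, Nat.even_iff]) (fun m => ?_) univ).trans_eq ?_
    · simp [hmoment, Nat.even_iff]
      nlinarith [sq_nonneg (Nm m ^ 2)]
    · simp [hmoment]
  have hs : MemLp (fun ω => ∑ m, Nm m * φ m ω) 4 μ := memLp_finsetSum univ fun m _ => hYLp m 4
  have hs_sq : MemLp (fun ω => (∑ m, Nm m * φ m ω) ^ 2) 2 μ := by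
    refine (memLp_two_iff_integrable_sq (hs.1.pow 2)).2 ?_
    simpa only [Pi.pow_apply, ← pow_mul] using hs.integrable_pow_of_le le_rfl
  rw [variance_eq_sub hs_sq]
  simp only [Pi.pow_apply, ← pow_mul, hsecond]
  linarith
end

section
/- Let Z₁, …, Z_{r₂} be i.i.d. exponential random variables with rate a > 0 (mean 1/a), and let Z̄ := (1/r₂)·Σ_{j=1}^{r₂} Z_j. Then for every ε₂ with 0 < ε₂ ≤ 1, P( (1−ε₂)·a ≤ 1/Z̄ ≤ (1+ε₂)·a ) ≥ 1 − 2·exp(−ε₂²·r₂/12). -/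
/-!
With `S = ∑ j, Z j` and `n = r₂`, the estimate `n / S` leaves `[(1 - ε) a, (1 + ε) a]` only if
`(1 + ε) a S ≤ n` or `n < (1 - ε) a S`. Each `Z j` has law `expMeasure a`, whose moment generating
function is `a / (a - t)` for `t < a`, so by independence `S` has moment generating function
`(a / (a - t)) ^ n`. The Chernoff bound at `t = a (1 - u)`, for the threshold `n / (u a)`,
bounds both tails by `(exp (1 - u⁻¹) / u) ^ n`, and the elementary inequality
`1 - u⁻¹ + (u - 1)² / 12 ≤ log u` on `(0, 2]`, applied to `u = 1 ± ε`, turns this into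
`exp (-ε² n / 12)`.
-/

open MeasureTheory ProbabilityTheory Finset

open Real

lemma inv_one_div_mul_mem_Icc {n s l u : ℝ} (hn : 0 ≤ n) (hu : 0 < u) (hnu : n < u * s)
    (hln : l * s ≤ n) : ((1 / n) * s)⁻¹ ∈ Set.Icc l u := by
  have hs : 0 < s := pos_of_mul_pos_right (hn.trans_lt hnu) hu.le
  rw [one_div_mul_eq_div, inv_div, Set.mem_Icc, le_div_iff₀ hs, div_le_iff₀ hs]
  exact ⟨hln, hnu.le⟩

lemma one_sub_inv_add_sq_div_le_log {u : ℝ} (hu0 : 0 < u) (hu2 : u ≤ 2) :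
    1 - u⁻¹ + (u - 1) ^ 2 / 12 ≤ log u := by
  rcases le_or_gt 1 u with hu1 | hu1
  · -- `log u = -log (1 - v)` with `v = 1 - u⁻¹ ∈ [0, 1/2]`, and the series of `-log (1 - v)` has
    -- nonnegative terms, so `v + v² / 2 ≤ log u`; finally `(u - 1)² = v² u² ≤ 4 v²`.
    have hv0 : 0 ≤ 1 - u⁻¹ := sub_nonneg.mpr (inv_le_one_of_one_le₀ hu1)
    have hv1 : 1 - u⁻¹ < 1 := by linarith [inv_pos.mpr hu0]
    have hseries := sum_le_hasSum (range 2) (fun n _ => by positivity)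
      (hasSum_pow_div_log_of_abs_lt_one (abs_lt.mpr ⟨by linarith, hv1⟩))
    rw [sub_sub_cancel, log_inv, neg_neg] at hseries
    norm_num [sum_range_succ] at hseries
    have hvu : (1 - u⁻¹) * u = u - 1 := by field_simp
    have hsq : (u - 1) ^ 2 ≤ 4 * (1 - u⁻¹) ^ 2 := by
      rw [← hvu, mul_pow]
      exact mul_le_mul_of_nonneg_left (by nlinarith) (sq_nonneg _) |>.trans_eq (mul_comm _ _)
    nlinarith
  · -- here `u⁻¹ ≤ exp w` for `w = u⁻¹ - 1 - (u - 1)² / 12 ≥ 1 - u ≥ 0`, from `1 + w + w² / 2 ≤ exp w`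
    rw [le_log_iff_exp_le hu0]
    set w := u⁻¹ - 1 - (u - 1) ^ 2 / 12 with hw_def
    have hw : 1 - u ≤ w := by
      have h1 : (1 - u) ^ 2 ≤ (1 - u) ^ 2 / u := le_div_self (sq_nonneg _) hu0 hu1.le
      have h2 : u⁻¹ - 1 = (1 - u) + (1 - u) ^ 2 / u := by field_simp; ring
      rw [hw_def, h2]; nlinarith [sq_nonneg (1 - u)]
    have hw2 : (1 - u) ^ 2 ≤ w ^ 2 := pow_le_pow_left₀ (by linarith) hw 2
    have hu_w : u * (1 + w) = 1 - u * (u - 1) ^ 2 / 12 := by rw [hw_def]; field_simp; ring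
    have : 1 ≤ u * exp w := by
      nlinarith [quadratic_le_exp_of_nonneg (x := w) (by linarith),
        mul_le_mul_of_nonneg_left hw2 hu0.le]
    calc exp (1 - u⁻¹ + (u - 1) ^ 2 / 12) = (exp w)⁻¹ := by rw [← exp_neg, hw_def]; ring_nf
      _ ≤ u := by rw [inv_le_iff_one_le_mul₀ (exp_pos w)]; linarith

lemma exponentialPDF_mul_ofReal_exp_mul {a t : ℝ} (ht : t < a) (x : ℝ) :
    exponentialPDF a x * ENNReal.ofReal (exp (t * x))
      = ENNReal.ofReal (a / (a - t)) * exponentialPDF (a - t) x := by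
  have hat : a - t ≠ 0 := sub_ne_zero.mpr ht.ne'
  rw [exponentialPDF_eq, exponentialPDF_eq]
  split_ifs with hx
  · rw [← ENNReal.ofReal_mul' (exp_pos _).le,
      ← ENNReal.ofReal_mul' (mul_nonneg (sub_pos.mpr ht).le (exp_pos _).le)]
    congr 1
    rw [mul_assoc, ← exp_add]
    field_simp
    ring_nf
  · simp

lemma lintegral_exp_mul_expMeasure {a t : ℝ} (ht : t < a) :
    ∫⁻ x, ENNReal.ofReal (exp (t * x)) ∂expMeasure a = ENNReal.ofReal (a / (a - t)) := by
  rw [show expMeasure a = volume.withDensity (exponentialPDF a) from rfl,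
    lintegral_withDensity_eq_lintegral_mul _
      (by exact (measurable_exponentialPDFReal a).ennreal_ofReal) (by fun_prop)]
  simp only [Pi.mul_apply, exponentialPDF_mul_ofReal_exp_mul ht]
  rw [lintegral_const_mul _ (by exact (measurable_exponentialPDFReal _).ennreal_ofReal),
    lintegral_exponentialPDF_eq_one (sub_pos.mpr ht), mul_one]

lemma integrable_exp_mul_expMeasure {a t : ℝ} (ht : t < a) :
    Integrable (fun x => exp (t * x)) (expMeasure a) := by
  refine ⟨by fun_prop, ?_⟩
  rw [hasFiniteIntegral_iff_ofReal (ae_of_all _ fun x => (exp_pos _).le),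
    lintegral_exp_mul_expMeasure ht]
  exact ENNReal.ofReal_lt_top

lemma mgf_id_expMeasure {a t : ℝ} (ha : 0 ≤ a) (ht : t < a) :
    mgf id (expMeasure a) t = a / (a - t) := by
  rw [mgf, integral_eq_lintegral_of_nonneg_ae (ae_of_all _ fun x => (exp_pos _).le)
    (by fun_prop)]
  simp only [id, lintegral_exp_mul_expMeasure ht]
  exact ENNReal.toReal_ofReal (div_nonneg ha (sub_pos.mpr ht).le)

section Probability

variable {Ω : Type*} [MeasurableSpace Ω] {μ : Measure Ω}

lemma map_eq_expMeasure_of_measure_lt [IsProbabilityMeasure μ] {a : ℝ} (ha : 0 < a)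
    {X : Ω → ℝ} (hX : Measurable X)
    (hsurv : ∀ t, 0 ≤ t → μ {ω | t < X ω} = ENNReal.ofReal (exp (-(a * t)))) :
    μ.map X = expMeasure a := by
  have : IsProbabilityMeasure (μ.map X) := Measure.isProbabilityMeasure_map hX.aemeasurable
  have : IsProbabilityMeasure (expMeasure a) := isProbabilityMeasure_expMeasure ha
  have hcdf : ∀ t, 0 ≤ t → μ.real {ω | X ω ≤ t} = 1 - exp (-(a * t)) := by
    intro t ht
    have hcompl : {ω | X ω ≤ t} = {ω | t < X ω}ᶜ := by ext; simp
    rw [hcompl, probReal_compl_eq_one_sub (measurableSet_lt measurable_const hX), measureReal_def,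
      hsurv t ht, ENNReal.toReal_ofReal (exp_pos _).le]
  refine Measure.eq_of_cdf _ _ (StieltjesFunction.ext fun x => ?_)
  rw [cdf_eq_real, map_measureReal_apply hX measurableSet_Iic, cdf_expMeasure_eq ha]
  split_ifs with hx
  · exact hcdf x hx
  · refine le_antisymm ?_ measureReal_nonneg
    calc μ.real (X ⁻¹' Set.Iic x) ≤ μ.real {ω | X ω ≤ 0} :=
          measureReal_mono fun ω (hω : X ω ≤ x) => hω.trans (not_le.mp hx).le
      _ = 0 := by simp [hcdf 0 le_rfl]

section SumOfExponentials

variable {ι : Type*} [Fintype ι] {X : ι → Ω → ℝ} {a : ℝ}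

lemma integrable_exp_mul_sum_of_map_eq_expMeasure (hindep : iIndepFun X μ)
    (hmeas : ∀ i, Measurable (X i)) (hlaw : ∀ i, μ.map (X i) = expMeasure a) {t : ℝ}
    (ht : t < a) :
    Integrable (fun ω => exp (t * (∑ i, X i) ω)) μ :=
  have := hindep.isProbabilityMeasure
  hindep.integrable_exp_mul_sum hmeas fun i _ => by
    have h : Integrable (fun x => exp (t * x)) (μ.map (X i)) :=
      hlaw i ▸ integrable_exp_mul_expMeasure ht
    exact (integrable_map_measure h.aestronglyMeasurable (hmeas i).aemeasurable).mp h

lemma mgf_sum_of_map_eq_expMeasure (hindep : iIndepFun X μ) (hmeas : ∀ i, Measurable (X i))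
    (hlaw : ∀ i, μ.map (X i) = expMeasure a) (ha : 0 ≤ a) {t : ℝ} (ht : t < a) :
    mgf (∑ i, X i) μ t = (a / (a - t)) ^ Fintype.card ι := by
  rw [hindep.mgf_sum hmeas, ← card_univ]
  refine prod_eq_pow_card fun i _ => ?_
  rw [← mgf_id_map (hmeas i).aemeasurable, hlaw i, mgf_id_expMeasure ha ht]

lemma exp_mul_div_pow_le_exp {a u : ℝ} (ha : 0 < a) (hu0 : 0 < u) (hu2 : u ≤ 2) (n : ℕ) :
    exp (-(a * (1 - u)) * (n / (u * a))) * (a / (a - a * (1 - u))) ^ n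
      ≤ exp (-((u - 1) ^ 2 * n) / 12) := by
  have h1 : -(a * (1 - u)) * (n / (u * a)) = n * (1 - u⁻¹) := by field_simp; ring
  have h2 : a / (a - a * (1 - u)) = exp (-log u) := by
    rw [exp_neg, exp_log hu0, show a - a * (1 - u) = a * u by ring]; field_simp
  rw [h1, h2, ← exp_nat_mul, ← exp_add, exp_le_exp]
  nlinarith [one_sub_inv_add_sq_div_le_log hu0 hu2, (Nat.cast_nonneg n : (0 : ℝ) ≤ n)]

lemma measureReal_mul_sum_le_le_of_map_eq_expMeasure (hindep : iIndepFun X μ)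
    (hmeas : ∀ i, Measurable (X i)) (hlaw : ∀ i, μ.map (X i) = expMeasure a) (ha : 0 < a)
    {u : ℝ} (hu1 : 1 ≤ u) (hu2 : u ≤ 2) :
    μ.real {ω | u * a * ∑ i, X i ω ≤ Fintype.card ι}
      ≤ exp (-((u - 1) ^ 2 * Fintype.card ι) / 12) := by
  have := hindep.isProbabilityMeasure
  have hua : 0 < u * a := by positivity
  have ht : a * (1 - u) < a := by nlinarith
  have hset : {ω | u * a * ∑ i, X i ω ≤ Fintype.card ι}
      = {ω | (∑ i, X i) ω ≤ Fintype.card ι / (u * a)} := by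
    ext ω
    simp only [Set.mem_ofPred_eq, Finset.sum_apply, le_div_iff₀ hua]
    rw [mul_comm]
  rw [hset]
  refine (measure_le_le_exp_mul_mgf _ (by nlinarith)
    (integrable_exp_mul_sum_of_map_eq_expMeasure hindep hmeas hlaw ht)).trans ?_
  rw [mgf_sum_of_map_eq_expMeasure hindep hmeas hlaw ha.le ht]
  exact exp_mul_div_pow_le_exp ha (by linarith) hu2 _

lemma measureReal_lt_mul_sum_le_of_map_eq_expMeasure (hindep : iIndepFun X μ)
    (hmeas : ∀ i, Measurable (X i)) (hlaw : ∀ i, μ.map (X i) = expMeasure a) (ha : 0 < a)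
    {u : ℝ} (hu0 : 0 ≤ u) (hu1 : u ≤ 1) :
    μ.real {ω | (Fintype.card ι : ℝ) < u * a * ∑ i, X i ω}
      ≤ exp (-((u - 1) ^ 2 * Fintype.card ι) / 12) := by
  have := hindep.isProbabilityMeasure
  rcases hu0.eq_or_lt with rfl | hu0
  · simp [not_lt.mpr (Nat.cast_nonneg (α := ℝ) _), (exp_pos _).le]
  have hua : 0 < u * a := by positivity
  have ht : a * (1 - u) < a := by nlinarith
  have hset : {ω | (Fintype.card ι : ℝ) < u * a * ∑ i, X i ω}
      ⊆ {ω | Fintype.card ι / (u * a) ≤ (∑ i, X i) ω} := by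
    intro ω hω
    simp only [Set.mem_ofPred_eq, Finset.sum_apply, div_le_iff₀ hua] at hω ⊢
    linarith
  refine (measureReal_mono hset).trans <| (measure_ge_le_exp_mul_mgf _ (by nlinarith)
    (integrable_exp_mul_sum_of_map_eq_expMeasure hindep hmeas hlaw ht)).trans ?_
  rw [mgf_sum_of_map_eq_expMeasure hindep hmeas hlaw ha.le ht]
  exact exp_mul_div_pow_le_exp ha hu0 (by linarith) _

end SumOfExponentials

end Probability

theorem inv_exp_mean_concentration_general
    {Ω : Type*} [MeasurableSpace Ω] (μ : Measure Ω) [IsProbabilityMeasure μ]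
    (r₂ : ℕ) (a : ℝ) (ha : 0 < a)
    (Z : Fin r₂ → Ω → ℝ)
    (hmeas : ∀ j, Measurable (Z j))
    (hindep : iIndepFun Z μ)
    (hsurv : ∀ j t, 0 ≤ t →
      μ {ω | t < Z j ω} = ENNReal.ofReal (Real.exp (-(a * t))))
    (ε₂ : ℝ) (hε₂ : 0 < ε₂) (hε₂' : ε₂ ≤ 1) :
    1 - 2 * Real.exp (-(ε₂ ^ 2 * r₂) / 12) ≤
      (μ {ω | (1 - ε₂) * a ≤ ((1 / r₂) * ∑ j, Z j ω)⁻¹ ∧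
              ((1 / r₂) * ∑ j, Z j ω)⁻¹ ≤ (1 + ε₂) * a}).toReal := by
  have hlaw j := map_eq_expMeasure_of_measure_lt ha (hmeas j) (hsurv j)
  have hlow := measureReal_mul_sum_le_le_of_map_eq_expMeasure hindep hmeas hlaw ha
    (u := 1 + ε₂) (by linarith) (by linarith)
  have hupp := measureReal_lt_mul_sum_le_of_map_eq_expMeasure hindep hmeas hlaw ha
    (u := 1 - ε₂) (by linarith) (by linarith)
  simp only [Fintype.card_fin, add_sub_cancel_left, sub_sub_cancel_left, neg_sq] at hlow hupp
  set good := {ω | (1 - ε₂) * a ≤ ((1 / r₂) * ∑ j, Z j ω)⁻¹ ∧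
    ((1 / r₂) * ∑ j, Z j ω)⁻¹ ≤ (1 + ε₂) * a}
  set lower := {ω | (1 + ε₂) * a * ∑ j, Z j ω ≤ r₂}
  set upper := {ω | (r₂ : ℝ) < (1 - ε₂) * a * ∑ j, Z j ω}
  have hcover : Set.univ ⊆ good ∪ lower ∪ upper := by
    intro ω _
    by_contra h
    simp only [good, lower, upper, Set.mem_union, Set.mem_ofPred_eq, not_or, not_le,
      not_lt] at h
    exact h.1.1 (inv_one_div_mul_mem_Icc (Nat.cast_nonneg r₂) (by positivity) h.1.2 h.2)
  have hunion : 1 ≤ μ.real good + μ.real lower + μ.real upper := calc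
    1 = μ.real Set.univ := probReal_univ.symm
    _ ≤ μ.real (good ∪ lower ∪ upper) := measureReal_mono hcover
    _ ≤ μ.real good + μ.real lower + μ.real upper :=
      (measureReal_union_le _ _).trans (by gcongr; exact measureReal_union_le _ _)
  rw [← measureReal_def]
  linarith

/-- **Relative-error bound for the reciprocal of the empirical mean of i.i.d.
exponentials (inequality (2) of the paper).**
Let `Z 1, …, Z r₂` be i.i.d. exponential random variables with rate `a > 0`
(characterised by the survival function `P(Z j > t) = exp(-a t)` for `t ≥ 0`),
and let `Z̄ ω = (1/r₂) ∑ j, Z j ω`.  Then for every `0 < ε₂ ≤ 1`,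
`P((1-ε₂) a ≤ 1/Z̄ ≤ (1+ε₂) a) ≥ 1 - 2 exp(-ε₂² r₂ / 12)`. -/
theorem inv_exp_mean_concentration
    {Ω : Type*} [MeasurableSpace Ω] (μ : Measure Ω) [IsProbabilityMeasure μ]
    (r₂ : ℕ) (hr₂ : 0 < r₂) (a : ℝ) (ha : 0 < a)
    (Z : Fin r₂ → Ω → ℝ)
    (hmeas : ∀ j, Measurable (Z j))
    (hnonneg : ∀ j ω, 0 ≤ Z j ω)
    (hindep : iIndepFun Z μ)
    (hsurv : ∀ j t, 0 ≤ t →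
      μ {ω | t < Z j ω} = ENNReal.ofReal (Real.exp (-(a * t))))
    (ε₂ : ℝ) (hε₂ : 0 < ε₂) (hε₂' : ε₂ ≤ 1) :
    1 - 2 * Real.exp (-(ε₂ ^ 2 * r₂) / 12) ≤
      (μ {ω | (1 - ε₂) * a ≤ ((1 / r₂) * ∑ j, Z j ω)⁻¹ ∧
              ((1 / r₂) * ∑ j, Z j ω)⁻¹ ≤ (1 + ε₂) * a}).toReal :=
  inv_exp_mean_concentration_general μ r₂ a ha Z hmeas hindep hsurv ε₂ hε₂ hε₂'
end

section
/- Let N > 0, r₁ a positive integer, ε₁, ε₂ > 0, and F₂ a real number with 0 ≤ F₂ ≤ N². Suppose n₁, …, n_{r₁} and n̂₁, …, n̂_{r₁} are reals with 0 ≤ n_i ≤ N and (1−ε₂)·n_i ≤ n̂_i ≤ (1+ε₂)·n_i for every i, and suppose (1−ε₁)·F₂ ≤ (1/r₁)·Σ_{i=1}^{r₁} (2n_i − N)² ≤ (1+ε₁)·F₂. Then, with ε := ε₁ + 4·ε₂·(3+ε₂), one has F₂ − ε·N² ≤ (1/r₁)·Σ_{i=1}^{r₁} (2n̂_i − N)²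 ≤ F₂ + ε·N². -/
open Finset

/-- **Combined deterministic error bound (Section 3.2).**
Suppose `0 ≤ F₂ ≤ N²`, the true counts satisfy `0 ≤ n i ≤ N`, the estimates
satisfy `(1-ε₂) n i ≤ nhat i ≤ (1+ε₂) n i`, and the AMS estimate
`(1/r₁) ∑ i, (2 n i - N)²` lies within relative error `ε₁` of `F₂`.  Then with
`ε = ε₁ + 4 ε₂ (3 + ε₂)`, the final estimate `(1/r₁) ∑ i, (2 nhat i - N)²`
lies within additive error `ε N²` of `F₂`. -/
theorem combined_F2_error_bound
    (N : ℝ) (hN : 0 < N) (r₁ : ℕ) (hr₁ : 0 < r₁)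
    (ε₁ ε₂ : ℝ) (hε₁ : 0 < ε₁) (hε₂ : 0 < ε₂)
    (F₂ : ℝ) (hF₂0 : 0 ≤ F₂) (hF₂N : F₂ ≤ N ^ 2)
    (n nhat : Fin r₁ → ℝ)
    (hn0 : ∀ i, 0 ≤ n i) (hnN : ∀ i, n i ≤ N)
    (hlo : ∀ i, (1 - ε₂) * n i ≤ nhat i)
    (hhi : ∀ i, nhat i ≤ (1 + ε₂) * n i)
    (hams_lo : (1 - ε₁) * F₂ ≤ (1 / r₁) * ∑ i, (2 * n i - N) ^ 2)
    (hams_hi : (1 / r₁) * ∑ i, (2 * n i - N) ^ 2 ≤ (1 + ε₁) * F₂) :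
    F₂ - (ε₁ + 4 * ε₂ * (3 + ε₂)) * N ^ 2 ≤
        (1 / r₁) * ∑ i, (2 * nhat i - N) ^ 2 ∧
      (1 / r₁) * ∑ i, (2 * nhat i - N) ^ 2 ≤
        F₂ + (ε₁ + 4 * ε₂ * (3 + ε₂)) * N ^ 2 := by
  have hrpos : (0:ℝ) < (r₁ : ℝ) := by exact_mod_cast hr₁
  set C : ℝ := 4 * ε₂ * (1 + ε₂) * N ^ 2 with hC
  have hfacts : ∀ i, 0 ≤ (ε₂ * n i - (nhat i - n i)) * ((1 + ε₂) * N + (n i + nhat i - N))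
      ∧ 0 ≤ (ε₂ * n i + (nhat i - n i)) * ((1 + ε₂) * N - (n i + nhat i - N))
      ∧ 0 ≤ (ε₂ * n i - (nhat i - n i)) * ((1 + ε₂) * N - (n i + nhat i - N))
      ∧ 0 ≤ (ε₂ * n i + (nhat i - n i)) * ((1 + ε₂) * N + (n i + nhat i - N)) := by
    intro i
    have h1 := hlo i; have h2 := hhi i; have h3 := hn0 i; have h4 := hnN i
    have hA1 : 0 ≤ ε₂ * n i - (nhat i - n i) := by nlinarith
    have hA2 : 0 ≤ ε₂ * n i + (nhat i - n i) := by nlinarith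
    have hB1 : 0 ≤ (1 + ε₂) * N - (n i + nhat i - N) := by nlinarith [mul_nonneg hε₂.le (sub_nonneg.2 h4)]
    have hB2 : 0 ≤ (1 + ε₂) * N + (n i + nhat i - N) := by nlinarith [mul_nonneg hε₂.le (sub_nonneg.2 h4)]
    exact ⟨mul_nonneg hA1 hB2, mul_nonneg hA2 hB1, mul_nonneg hA1 hB1, mul_nonneg hA2 hB2⟩
  have hpt_hi : ∀ i, (2 * nhat i - N) ^ 2 ≤ (2 * n i - N) ^ 2 + C := by
    intro i
    obtain ⟨p1, p2, p3, p4⟩ := hfacts i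
    have h3 := hn0 i; have h4 := hnN i
    nlinarith [mul_nonneg (mul_nonneg hε₂.le (sub_nonneg.2 h4)) (mul_nonneg (by linarith : (0:ℝ) ≤ 1 + ε₂) hN.le)]
  have hpt_lo : ∀ i, (2 * n i - N) ^ 2 - C ≤ (2 * nhat i - N) ^ 2 := by
    intro i
    obtain ⟨p1, p2, p3, p4⟩ := hfacts i
    have h3 := hn0 i; have h4 := hnN i
    nlinarith [mul_nonneg (mul_nonneg hε₂.le (sub_nonneg.2 h4)) (mul_nonneg (by linarith : (0:ℝ) ≤ 1 + ε₂) hN.le)]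
  have hsum_hi : ∑ i, (2 * nhat i - N) ^ 2 ≤ (∑ i, (2 * n i - N) ^ 2) + r₁ * C := by
    calc ∑ i, (2 * nhat i - N) ^ 2 ≤ ∑ i, ((2 * n i - N) ^ 2 + C) :=
          Finset.sum_le_sum fun i _ => hpt_hi i
      _ = (∑ i, (2 * n i - N) ^ 2) + r₁ * C := by
          rw [Finset.sum_add_distrib, Finset.sum_const, card_univ, Fintype.card_fin,
            nsmul_eq_mul]
  have hsum_lo : (∑ i, (2 * n i - N) ^ 2) - r₁ * C ≤ ∑ i, (2 * nhat i - N) ^ 2 := by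
    calc (∑ i, (2 * n i - N) ^ 2) - r₁ * C
        = ∑ i, ((2 * n i - N) ^ 2 - C) := by
          rw [Finset.sum_sub_distrib, Finset.sum_const, card_univ, Fintype.card_fin,
            nsmul_eq_mul]
      _ ≤ ∑ i, (2 * nhat i - N) ^ 2 := Finset.sum_le_sum fun i _ => hpt_lo i
  have hinv : (0:ℝ) < 1 / (r₁:ℝ) := by positivity
  have hεF : ε₁ * F₂ ≤ ε₁ * N ^ 2 := by nlinarith
  have hCN : C ≤ 4 * ε₂ * (3 + ε₂) * N ^ 2 := by nlinarith [sq_nonneg N]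
  constructor
  · have h1 : (1 / (r₁:ℝ)) * ((∑ i, (2 * n i - N) ^ 2) - r₁ * C)
        ≤ (1 / r₁) * ∑ i, (2 * nhat i - N) ^ 2 :=
      mul_le_mul_of_nonneg_left hsum_lo hinv.le
    have h2 : (1 / (r₁:ℝ)) * ((∑ i, (2 * n i - N) ^ 2) - r₁ * C)
        = (1 / r₁) * (∑ i, (2 * n i - N) ^ 2) - C := by
      rw [mul_sub]; congr 1
      rw [one_div, inv_mul_cancel_left₀ hrpos.ne']
    linarith [hams_lo, hεF, hCN]
  · have h1 : (1 / (r₁:ℝ)) * ∑ i, (2 * nhat i - N) ^ 2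
        ≤ (1 / (r₁:ℝ)) * ((∑ i, (2 * n i - N) ^ 2) + r₁ * C) :=
      mul_le_mul_of_nonneg_left hsum_hi hinv.le
    have h2 : (1 / (r₁:ℝ)) * ((∑ i, (2 * n i - N) ^ 2) + r₁ * C)
        = (1 / r₁) * (∑ i, (2 * n i - N) ^ 2) + C := by
      rw [mul_add]; congr 1
      rw [one_div, inv_mul_cancel_left₀ hrpos.ne']
    linarith [hams_hi, hεF, hCN]
end
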